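/- arXiv:1401.6400 — 4 statements merged into one kernel-verified Lean document; each statement's English description precedes it below -/
import Mathlib

section
/- Let Q^A ∈ ℝ^{r×r} and Q^B ∈ ℝ^{s×s} be transition rate matrices of irreducible continuous-time Markov chains (off-diagonals nonnegative, rows summing to zero) with stationary distributions π^A and π^B (strictly positive probability row vectors with π^A Q^A = 0 and π^B Q^B = 0), where state r of chain A is identified with state 1 of chain B. Let Q ∈ ℝ^{(r+s-1)×(r+s-1)} be the glued rate matrix given by Q_{ij} = Q^A_{ij} 1(i,j ≤ r) + Q^B_{i-r+1, j-r+1} 1(i,j ≥ r) (indices shifted so the shared state is index r). Define π by π_i = C π^A_i π^B_1 for i < r, π_r = C π^A_r π^B_1, and π_{r+j-1} = C π^A_r π^B_j for j ≥ 2, with C = (π^A_r + π^B_1 - π^A_r π^B_1)^{-1}. Then π^T Q = 0. -/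
open Matrix

/-- The rate matrix obtained by gluing chain A (states `0,…,r`, shared state `r`)
and chain B (states `0,…,s`, shared state `0`) at one state: glued state space
`Fin (r+1+s)` where index `r` is the shared state.  Transition rates of both
chains are kept; at the shared state the (diagonal) entries add. -/
noncomputable def gluedOneQ (r s : ℕ)
    (QA : Matrix (Fin (r + 1)) (Fin (r + 1)) ℝ)
    (QB : Matrix (Fin (s + 1)) (Fin (s + 1)) ℝ) :
    Matrix (Fin (r + 1 + s)) (Fin (r + 1 + s)) ℝ := fun i j =>
  (if h : i.1 ≤ r ∧ j.1 ≤ r then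
      QA ⟨i.1, by omega⟩ ⟨j.1, by omega⟩ else 0) +
  (if h : r ≤ i.1 ∧ r ≤ j.1 then
      QB ⟨i.1 - r, by have := i.isLt; omega⟩ ⟨j.1 - r, by have := j.isLt; omega⟩ else 0)

/-- The proposed stationary distribution of the chain glued at one state:
`π_i = C π^A_i π^B_1` for states of A, `π_r = C π^A_r π^B_1` at the shared state,
and `π_{r+j} = C π^A_r π^B_j` for the non-shared states of B, where
`C = (π^A_r + π^B_1 − π^A_r π^B_1)⁻¹`. -/
noncomputable def gluedOnePi (r s : ℕ)
    (piA : Fin (r + 1) → ℝ) (piB : Fin (s + 1) → ℝ) :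
    Fin (r + 1 + s) → ℝ := fun i =>
  if h : i.1 < r then
    (piA (Fin.last r) + piB 0 - piA (Fin.last r) * piB 0)⁻¹ * piA ⟨i.1, by omega⟩ * piB 0
  else
    (piA (Fin.last r) + piB 0 - piA (Fin.last r) * piB 0)⁻¹ * piA (Fin.last r) *
      piB ⟨i.1 - r, by have := i.isLt; omega⟩

/-!
The glued rate matrix is the sum of `QA`, padded with zeros outside the first `r + 1` states,
and `QB`, padded with zeros outside the last `s + 1` states. On the first block `π` is
`C π^B_0 • π^A`, on the second it is `C π^A_r • π^B`, so each padded summand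
annihilates `π` by the stationarity of `π^A` resp. `π^B`.
-/

def gluedOneInr (r s : ℕ) (b : Fin (s + 1)) : Fin (r + 1 + s) := ⟨r + b, by omega⟩

lemma gluedOneInr_injective (r s : ℕ) : Function.Injective (gluedOneInr r s) :=
  fun a b h => Fin.ext (by simpa [gluedOneInr] using h)

noncomputable def gluedOneConst (r s : ℕ) (piA : Fin (r + 1) → ℝ) (piB : Fin (s + 1) → ℝ) :
    ℝ :=
  (piA (Fin.last r) + piB 0 - piA (Fin.last r) * piB 0)⁻¹

section Gluing

variable {r s : ℕ}

lemma gluedOnePi_castAdd (piA : Fin (r + 1) → ℝ) (piB : Fin (s + 1) → ℝ) (a : Fin (r + 1)) :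
    gluedOnePi r s piA piB (Fin.castAdd s a) = gluedOneConst r s piA piB * piB 0 * piA a := by
  unfold gluedOnePi gluedOneConst
  split_ifs with ha
  · simp only [Fin.val_castAdd]; ring
  · obtain rfl : a = Fin.last r := Fin.ext (by simp only [Fin.val_castAdd] at ha; simp; omega)
    simp only [Fin.val_castAdd, Fin.val_last, Nat.sub_self, Fin.zero_eta]; ring

lemma gluedOnePi_gluedOneInr (piA : Fin (r + 1) → ℝ) (piB : Fin (s + 1) → ℝ)
    (b : Fin (s + 1)) :
    gluedOnePi r s piA piB (gluedOneInr r s b) =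
      gluedOneConst r s piA piB * piA (Fin.last r) * piB b := by
  simp [gluedOnePi, gluedOneConst, gluedOneInr]

lemma sum_mul_gluedOneQ (QA : Matrix (Fin (r + 1)) (Fin (r + 1)) ℝ)
    (QB : Matrix (Fin (s + 1)) (Fin (s + 1)) ℝ) (v : Fin (r + 1 + s) → ℝ)
    (j : Fin (r + 1 + s)) :
    ∑ i, v i * gluedOneQ r s QA QB i j =
      (if h : j.1 ≤ r then ∑ a, v (Fin.castAdd s a) * QA a ⟨j, by omega⟩ else 0) +
      (if h : r ≤ j.1 then ∑ b, v (gluedOneInr r s b) * QB b ⟨j - r, by omega⟩ else 0) := by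
  simp only [gluedOneQ, mul_add, Finset.sum_add_distrib]
  congr 1
  · split_ifs with hj
    · refine (Fintype.sum_of_injective _ (Fin.castAdd_injective _ _) _ _ (fun i hi => ?_)
        (fun a => by rw [dif_pos ⟨by simp; omega, hj⟩]; rfl)).symm
      rw [dif_neg fun h => hi ⟨⟨i, by omega⟩, rfl⟩, mul_zero]
    · simp [hj]
  · split_ifs with hj
    · refine (Fintype.sum_of_injective _ (gluedOneInr_injective r s) _ _ (fun i hi => ?_)
        (fun b => by rw [dif_pos ⟨by simp [gluedOneInr], hj⟩]; simp [gluedOneInr])).symm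
      have hi' : ¬(r ≤ i.1 ∧ r ≤ j.1) := fun h =>
        hi ⟨⟨i - r, by omega⟩, Fin.ext (by simp [gluedOneInr]; omega)⟩
      rw [dif_neg hi', mul_zero]
    · simp [hj]

end Gluing

theorem stmt_4_general (r s : ℕ)
    (QA : Matrix (Fin (r + 1)) (Fin (r + 1)) ℝ)
    (QB : Matrix (Fin (s + 1)) (Fin (s + 1)) ℝ)
    (piA : Fin (r + 1) → ℝ) (piB : Fin (s + 1) → ℝ)
    (hAstat : ∀ j, ∑ i, piA i * QA i j = 0)
    (hBstat : ∀ j, ∑ i, piB i * QB i j = 0) :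
    ∀ j, ∑ i, gluedOnePi r s piA piB i * gluedOneQ r s QA QB i j = 0 := by
  intro j
  simp only [sum_mul_gluedOneQ, gluedOnePi_castAdd, gluedOnePi_gluedOneInr, mul_assoc,
    ← Finset.mul_sum, hAstat, hBstat, mul_zero, dite_eq_ite, ite_self, add_zero]

/-- Gluing two irreducible continuous-time Markov chains at a single state:
the vector `π` given by `gluedOnePi` satisfies `πᵀ Q = 0` for the glued rate
matrix `Q = gluedOneQ`. -/
theorem stmt_4 (r s : ℕ)
    (QA : Matrix (Fin (r + 1)) (Fin (r + 1)) ℝ)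
    (QB : Matrix (Fin (s + 1)) (Fin (s + 1)) ℝ)
    (hAoff : ∀ i j, i ≠ j → 0 ≤ QA i j) (hBoff : ∀ i j, i ≠ j → 0 ≤ QB i j)
    (hArow : ∀ i, ∑ j, QA i j = 0) (hBrow : ∀ i, ∑ j, QB i j = 0)
    (hAirr : ∀ i j : Fin (r + 1), i ≠ j →
      Relation.TransGen (fun a b => 0 < QA a b) i j)
    (hBirr : ∀ i j : Fin (s + 1), i ≠ j →
      Relation.TransGen (fun a b => 0 < QB a b) i j)
    (piA : Fin (r + 1) → ℝ) (piB : Fin (s + 1) → ℝ)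
    (hApos : ∀ i, 0 < piA i) (hBpos : ∀ j, 0 < piB j)
    (hAsum : ∑ i, piA i = 1) (hBsum : ∑ j, piB j = 1)
    (hAstat : ∀ j, ∑ i, piA i * QA i j = 0)
    (hBstat : ∀ j, ∑ i, piB i * QB i j = 0) :
    ∀ j, ∑ i, gluedOnePi r s piA piB i * gluedOneQ r s QA QB i j = 0 :=
  stmt_4_general r s QA QB piA piB hAstat hBstat
end

section
/- Under Condition (A), i.e., π^A_1/π^A_2 = π^B_1/π^B_2, the vector π defined by π_i = C π^A_i π^B_1 for i in S^A, π_1 = C π^A_1 π^B_1, π_2 = C π^A_2 π^B_1, π_j = C π^A_1 π^B_j for j in S^B, with C = (π^A_1 + π^B_1 − π^A_1(π^B_1+π^B_2))^{-1}, satisfies π^T Q = 0, where Q is the transition rate matrix of the chain obtained by gluing chains A and B at two states 1 and 2. -/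
/-- The rate matrix of the chain obtained by gluing chain A (state space
`Fin m ⊕ Fin 2`, the `Fin 2` part being the shared states 1 and 2) and chain B
(state space `Fin 2 ⊕ Fin n`) at the two shared states:
`Q_{ij} = Q^A_{ij} 1(i,j ∈ V^A) + Q^B_{ij} 1(i,j ∈ V^B)`. -/
def glueTwoQ {m n : ℕ}
    (QA : Matrix (Fin m ⊕ Fin 2) (Fin m ⊕ Fin 2) ℝ)
    (QB : Matrix (Fin 2 ⊕ Fin n) (Fin 2 ⊕ Fin n) ℝ) :
    Matrix (Fin m ⊕ (Fin 2 ⊕ Fin n)) (Fin m ⊕ (Fin 2 ⊕ Fin n)) ℝ := fun i j =>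
  match i, j with
  | .inl i, .inl i' => QA (.inl i) (.inl i')
  | .inl i, .inr (.inl k') => QA (.inl i) (.inr k')
  | .inl _, .inr (.inr _) => 0
  | .inr (.inl k), .inl i' => QA (.inr k) (.inl i')
  | .inr (.inl k), .inr (.inl k') => QA (.inr k) (.inr k') + QB (.inl k) (.inl k')
  | .inr (.inl k), .inr (.inr j') => QB (.inl k) (.inr j')
  | .inr (.inr _), .inl _ => 0
  | .inr (.inr j), .inr (.inl k') => QB (.inr j) (.inl k')
  | .inr (.inr j), .inr (.inr j') => QB (.inr j) (.inr j')

/-- The vector `π` of Theorem 5.1 (parallel case): `π_i = C π^A_i π^B_1` on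
`S^A ∪ {1,2}` and `π_j = C π^A_1 π^B_j` on `S^B`, with
`C = (π^A_1 + π^B_1 − π^A_1(π^B_1 + π^B_2))⁻¹`. -/
noncomputable def glueTwoPi {m n : ℕ}
    (piA : Fin m ⊕ Fin 2 → ℝ) (piB : Fin 2 ⊕ Fin n → ℝ) :
    Fin m ⊕ (Fin 2 ⊕ Fin n) → ℝ := fun i =>
  match i with
  | .inl i => (piA (.inr 0) + piB (.inl 0) -
      piA (.inr 0) * (piB (.inl 0) + piB (.inl 1)))⁻¹ * piA (.inl i) * piB (.inl 0)
  | .inr (.inl k) => (piA (.inr 0) + piB (.inl 0) -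
      piA (.inr 0) * (piB (.inl 0) + piB (.inl 1)))⁻¹ * piA (.inr k) * piB (.inl 0)
  | .inr (.inr j) => (piA (.inr 0) + piB (.inl 0) -
      piA (.inr 0) * (piB (.inl 0) + piB (.inl 1)))⁻¹ * piA (.inr 0) * piB (.inr j)


/-!
Write `c` for the normalising constant. The glued vector is `c π^B_1 π^A` on the states of chain A,
and Condition (A) says exactly that it is `c π^A_1 π^B` on the states of chain B (the two agree on
the shared states). Since every column of the glued rate matrix is the sum of the corresponding
columns of `Q^A` and `Q^B`, each extended by zero, `πᵀ Q` is a combination of `π^A Q^A = 0` and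
`π^B Q^B = 0`.
-/

open Finset

section Gluing

variable {m n : ℕ} (QA : Matrix (Fin m ⊕ Fin 2) (Fin m ⊕ Fin 2) ℝ)
  (QB : Matrix (Fin 2 ⊕ Fin n) (Fin 2 ⊕ Fin n) ℝ) (x : Fin m ⊕ (Fin 2 ⊕ Fin n) → ℝ)

theorem sum_mul_glueTwoQ_inl (i : Fin m) :
    ∑ v, x v * glueTwoQ QA QB v (.inl i) = ∑ a, x (Sum.map id .inl a) * QA a (.inl i) := by
  simp [glueTwoQ, Fintype.sum_sum_type]

theorem sum_mul_glueTwoQ_inr_inl (k : Fin 2) :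
    ∑ v, x v * glueTwoQ QA QB v (.inr (.inl k)) =
      ∑ a, x (Sum.map id .inl a) * QA a (.inr k) + ∑ b, x (.inr b) * QB b (.inl k) := by
  simp only [glueTwoQ, Fintype.sum_sum_type, Sum.map_inl, Sum.map_inr, id, mul_add, sum_add_distrib]
  ring

theorem sum_mul_glueTwoQ_inr_inr (j : Fin n) :
    ∑ v, x v * glueTwoQ QA QB v (.inr (.inr j)) = ∑ b, x (.inr b) * QB b (.inr j) := by
  simp [glueTwoQ, Fintype.sum_sum_type]

end Gluing

noncomputable def glueTwoScale {m n : ℕ} (piA : Fin m ⊕ Fin 2 → ℝ) (piB : Fin 2 ⊕ Fin n → ℝ) : ℝ :=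
  (piA (.inr 0) + piB (.inl 0) - piA (.inr 0) * (piB (.inl 0) + piB (.inl 1)))⁻¹

section GlueTwoPi

variable {m n : ℕ} {piA : Fin m ⊕ Fin 2 → ℝ} {piB : Fin 2 ⊕ Fin n → ℝ}

theorem glueTwoPi_map_inl (a : Fin m ⊕ Fin 2) :
    glueTwoPi piA piB (Sum.map id .inl a) = glueTwoScale piA piB * piB (.inl 0) * piA a := by
  rcases a with i | k <;> simp only [glueTwoPi, glueTwoScale, Sum.map_inl, Sum.map_inr, id] <;> ring

theorem glueTwoPi_inr (hcondA : piA (.inr 0) * piB (.inl 1) = piA (.inr 1) * piB (.inl 0)) :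
    ∀ b, glueTwoPi piA piB (.inr b) = glueTwoScale piA piB * piA (.inr 0) * piB b
  | .inl 0 => rfl
  | .inl 1 => show glueTwoScale piA piB * piA (.inr 1) * piB (.inl 0) = _ by
      linear_combination (-glueTwoScale piA piB) * hcondA
  | .inr _ => rfl

end GlueTwoPi

theorem sum_const_mul_mul_eq_zero {ι κ R : Type*} [Fintype ι] [NonUnitalSemiring R] {p : ι → R}
    {Q : ι → κ → R} {j : κ} (h : ∑ i, p i * Q i j = 0) (c : R) : ∑ i, c * p i * Q i j = 0 := by
  simp_rw [mul_assoc, ← mul_sum, h, mul_zero]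

theorem stmt_5_general {m n : ℕ}
    (QA : Matrix (Fin m ⊕ Fin 2) (Fin m ⊕ Fin 2) ℝ)
    (QB : Matrix (Fin 2 ⊕ Fin n) (Fin 2 ⊕ Fin n) ℝ)
    (piA : Fin m ⊕ Fin 2 → ℝ) (piB : Fin 2 ⊕ Fin n → ℝ)
    (hAstat : ∀ j, ∑ i, piA i * QA i j = 0)
    (hBstat : ∀ j, ∑ i, piB i * QB i j = 0)
    (hcondA : piA (.inr 0) * piB (.inl 1) = piA (.inr 1) * piB (.inl 0)) :
    ∀ j, ∑ i, glueTwoPi piA piB i * glueTwoQ QA QB i j = 0 := by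
  have hA : ∀ j, ∑ a, glueTwoPi piA piB (Sum.map id .inl a) * QA a j = 0 := fun j => by
    simp_rw [glueTwoPi_map_inl]
    exact sum_const_mul_mul_eq_zero (hAstat j) _
  have hB : ∀ j, ∑ b, glueTwoPi piA piB (.inr b) * QB b j = 0 := fun j => by
    simp_rw [glueTwoPi_inr hcondA]
    exact sum_const_mul_mul_eq_zero (hBstat j) _
  rintro (i | k | j)
  · rw [sum_mul_glueTwoQ_inl, hA]
  · rw [sum_mul_glueTwoQ_inr_inl, hA, hB, add_zero]
  · rw [sum_mul_glueTwoQ_inr_inr, hB]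

/-- Under Condition (A), `π^A_1/π^A_2 = π^B_1/π^B_2`, the glued vector `π`
satisfies `πᵀ Q = 0` for the rate matrix `Q` of the chain obtained by gluing
chains A and B at the two states 1 and 2. -/
theorem stmt_5 {m n : ℕ}
    (QA : Matrix (Fin m ⊕ Fin 2) (Fin m ⊕ Fin 2) ℝ)
    (QB : Matrix (Fin 2 ⊕ Fin n) (Fin 2 ⊕ Fin n) ℝ)
    (hAoff : ∀ i j, i ≠ j → 0 ≤ QA i j) (hBoff : ∀ i j, i ≠ j → 0 ≤ QB i j)
    (hArow : ∀ i, ∑ j, QA i j = 0) (hBrow : ∀ i, ∑ j, QB i j = 0)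
    (hAirr : ∀ i j, i ≠ j → Relation.TransGen (fun a b => 0 < QA a b) i j)
    (hBirr : ∀ i j, i ≠ j → Relation.TransGen (fun a b => 0 < QB a b) i j)
    (piA : Fin m ⊕ Fin 2 → ℝ) (piB : Fin 2 ⊕ Fin n → ℝ)
    (hApos : ∀ i, 0 < piA i) (hBpos : ∀ j, 0 < piB j)
    (hAsum : ∑ i, piA i = 1) (hBsum : ∑ j, piB j = 1)
    (hAstat : ∀ j, ∑ i, piA i * QA i j = 0)
    (hBstat : ∀ j, ∑ i, piB i * QB i j = 0)
    (hcondA : piA (.inr 0) * piB (.inl 1) = piA (.inr 1) * piB (.inl 0)) :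
    ∀ j, ∑ i, glueTwoPi piA piB i * glueTwoQ QA QB i j = 0 :=
  stmt_5_general QA QB piA piB hAstat hBstat hcondA
end

section
/- Under Condition (A) (π^A_1 π^B_2 = π^A_2 π^B_1), the entries of the vector π given by π_i = C π^A_i π^B_1 on S^A ∪ {1,2} and π_j = C π^A_1 π^B_j on S^B, with C = (π^A_1 + π^B_1 − π^A_1(π^B_1+π^B_2))^{-1}, are strictly positive and sum to 1. -/
/-! Up to the factor `C`, the glued vector puts mass `π^B_1 π^A` on `S^A ∪ {1,2}` and
`π^A_1 π^B` on `S^B`. Since `π^B(S^B) = 1 − π^B_1 − π^B_2`, the total mass before normalising is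
`π^B_1 + π^A_1 π^B(S^B) = C⁻¹`, which is at least `π^B_1 > 0`. -/

section GlueTwo

variable {m n : ℕ} (piA : Fin m ⊕ Fin 2 → ℝ) (piB : Fin 2 ⊕ Fin n → ℝ)

/-- The reciprocal of the normalising constant `C`. -/
def glueTwoDenom : ℝ :=
  piA (.inr 0) + piB (.inl 0) - piA (.inr 0) * (piB (.inl 0) + piB (.inl 1))

theorem sum_glueTwoPi :
    ∑ i, glueTwoPi piA piB i = (glueTwoDenom piA piB)⁻¹ *
      (piB (.inl 0) * ∑ i, piA i + piA (.inr 0) * ∑ j, piB (.inr j)) := by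
  simp only [Fintype.sum_sum_type, Fin.sum_univ_two, glueTwoPi, ← Finset.sum_mul,
    ← Finset.mul_sum, glueTwoDenom]
  ring

variable {piA piB}

theorem glueTwoDenom_eq (hBsum : ∑ j, piB j = 1) :
    glueTwoDenom piA piB = piB (.inl 0) + piA (.inr 0) * ∑ j, piB (.inr j) := by
  rw [Fintype.sum_sum_type, Fin.sum_univ_two] at hBsum
  rw [glueTwoDenom]
  linear_combination -piA (.inr 0) * hBsum

theorem glueTwoDenom_pos (hA : 0 ≤ piA (.inr 0)) (hBpos : ∀ j, 0 < piB j)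
    (hBsum : ∑ j, piB j = 1) : 0 < glueTwoDenom piA piB := by
  rw [glueTwoDenom_eq hBsum]
  have hSB := Finset.sum_nonneg fun j (_ : j ∈ Finset.univ) => (hBpos (.inr j)).le
  have hB1 := hBpos (.inl 0)
  positivity

end GlueTwo

theorem stmt_6_general {m n : ℕ}
    (piA : Fin m ⊕ Fin 2 → ℝ) (piB : Fin 2 ⊕ Fin n → ℝ)
    (hApos : ∀ i, 0 < piA i) (hBpos : ∀ j, 0 < piB j)
    (hAsum : ∑ i, piA i = 1) (hBsum : ∑ j, piB j = 1) :
    (∀ i, 0 < glueTwoPi piA piB i) ∧ ∑ i, glueTwoPi piA piB i = 1 := by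
  have hD := glueTwoDenom_pos (hApos (.inr 0)).le hBpos hBsum
  refine ⟨?_, ?_⟩
  · rintro (i | k | j) <;> exact mul_pos (mul_pos (inv_pos.2 hD) (hApos _)) (hBpos _)
  · rw [sum_glueTwoPi, hAsum, mul_one, ← glueTwoDenom_eq hBsum, inv_mul_cancel₀ hD.ne']

/-- Under Condition (A) (`π^A_1 π^B_2 = π^A_2 π^B_1`), the entries of the
glued vector `π` are strictly positive and sum to 1. -/
theorem stmt_6 {m n : ℕ}
    (piA : Fin m ⊕ Fin 2 → ℝ) (piB : Fin 2 ⊕ Fin n → ℝ)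
    (hApos : ∀ i, 0 < piA i) (hBpos : ∀ j, 0 < piB j)
    (hAsum : ∑ i, piA i = 1) (hBsum : ∑ j, piB j = 1)
    (hcondA : piA (.inr 0) * piB (.inl 1) = piA (.inr 1) * piB (.inl 0)) :
    (∀ i, 0 < glueTwoPi piA piB i) ∧ ∑ i, glueTwoPi piA piB i = 1 :=
  stmt_6_general piA piB hApos hBpos hAsum hBsum
end

section
/- Let Q ∈ ℝ^{s×s} be a matrix with nonnegative off-diagonal entries, nonpositive diagonal entries, and rows summing to zero, which is irreducible (the associated directed graph on {1,…,s} with edges (i,j) whenever i≠j and Q_{ij} > 0 is strongly connected), and assume s ≥ 2. Let Q₀ be the matrix obtained from Q by replacing columns 1 and 2 with zeros except that the diagonal entries Q₀_{11} = Q_{11} and Q₀_{22} = Q_{22} are kept. Then Q₀ is invertible. -/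
/-!
A weakly chained diagonally dominant matrix is invertible: if `A v = 0`, then at an index `i`
where `‖v i‖` is maximal, diagonal dominance of row `i` forces `‖v j‖ = ‖v i‖` along every edge
`A i j ≠ 0` and rules out strict dominance of row `i` unless `v = 0`. Following edges from a
maximal index to a strictly dominant row therefore shows `v = 0`.

`Q₀` is such a matrix. Its rows are weakly dominant because the rows of `Q` sum to zero, and row
`i` is strictly dominant as soon as `Q` has a transition from `i` into state 1 or 2. By
irreducibility every state has a path to state 1 or 2, and the part of that path before it first
enters one of them is a path in the graph of `Q₀`.
-/

open Finset Relation

namespace Matrix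

section DiagDominant

variable {K n : Type*} [NormedField K] [Fintype n] [DecidableEq n] {A : Matrix n n K}
  {v : n → K}

theorem norm_diag_mul_le_of_mulVec_eq_zero (hv : A *ᵥ v = 0) (i : n) :
    ‖A i i‖ * ‖v i‖ ≤ ∑ j ∈ univ.erase i, ‖A i j‖ * ‖v j‖ := by
  have hrow : A i i * v i = -∑ j ∈ univ.erase i, A i j * v j := by
    have := congrFun hv i
    rw [mulVec, dotProduct, ← add_sum_erase _ _ (mem_univ i)] at this
    exact eq_neg_of_add_eq_zero_left this
  calc ‖A i i‖ * ‖v i‖ = ‖∑ j ∈ univ.erase i, A i j * v j‖ := by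
        rw [← norm_mul, hrow, norm_neg]
    _ ≤ ∑ j ∈ univ.erase i, ‖A i j‖ * ‖v j‖ :=
        (norm_sum_le _ _).trans_eq (by simp only [norm_mul])

theorem le_sum_norm_of_mulVec_eq_zero (hv : A *ᵥ v = 0) {i : n}
    (hmax : ∀ j, ‖v j‖ ≤ ‖v i‖) (hvi : v i ≠ 0) :
    ‖A i i‖ ≤ ∑ j ∈ univ.erase i, ‖A i j‖ := by
  refine le_of_mul_le_mul_right ?_ (norm_pos_iff.2 hvi)
  calc ‖A i i‖ * ‖v i‖ ≤ ∑ j ∈ univ.erase i, ‖A i j‖ * ‖v j‖ :=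
        norm_diag_mul_le_of_mulVec_eq_zero hv i
    _ ≤ ∑ j ∈ univ.erase i, ‖A i j‖ * ‖v i‖ :=
        sum_le_sum fun j _ => mul_le_mul_of_nonneg_left (hmax j) (norm_nonneg _)
    _ = (∑ j ∈ univ.erase i, ‖A i j‖) * ‖v i‖ := (sum_mul ..).symm

theorem norm_eq_of_mulVec_eq_zero (hv : A *ᵥ v = 0) {i : n} (hmax : ∀ j, ‖v j‖ ≤ ‖v i‖)
    (hdom : ∑ j ∈ univ.erase i, ‖A i j‖ ≤ ‖A i i‖) {j : n} (hij : A i j ≠ 0) :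
    ‖v j‖ = ‖v i‖ := by
  have hgap : ∑ k ∈ univ.erase i, ‖A i k‖ * (‖v i‖ - ‖v k‖) = 0 := by
    refine le_antisymm ?_ (sum_nonneg fun k _ =>
      mul_nonneg (norm_nonneg _) (sub_nonneg.2 (hmax k)))
    calc ∑ k ∈ univ.erase i, ‖A i k‖ * (‖v i‖ - ‖v k‖)
        = (∑ k ∈ univ.erase i, ‖A i k‖) * ‖v i‖ - ∑ k ∈ univ.erase i, ‖A i k‖ * ‖v k‖ := by
          simp only [mul_sub, sum_sub_distrib, sum_mul]
      _ ≤ ‖A i i‖ * ‖v i‖ - ‖A i i‖ * ‖v i‖ :=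
          sub_le_sub (mul_le_mul_of_nonneg_right hdom (norm_nonneg _))
            (norm_diag_mul_le_of_mulVec_eq_zero hv i)
      _ = 0 := sub_self _
  by_cases hji : j = i
  · rw [hji]
  have hgap_j := (sum_eq_zero_iff_of_nonneg fun k _ =>
    mul_nonneg (norm_nonneg _) (sub_nonneg.2 (hmax k))).1 hgap j (mem_erase.2 ⟨hji, mem_univ j⟩)
  rcases mul_eq_zero.1 hgap_j with h | h
  · exact absurd (norm_eq_zero.1 h) hij
  · linarith

theorem det_ne_zero_of_weaklyChainedDiagDominant
    (hdom : ∀ k, ∑ j ∈ univ.erase k, ‖A k j‖ ≤ ‖A k k‖)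
    (hchain : ∀ i, ∃ k, ReflTransGen (fun a b => A a b ≠ 0) i k ∧
      ∑ j ∈ univ.erase k, ‖A k j‖ < ‖A k k‖) :
    A.det ≠ 0 := by
  intro hdet
  obtain ⟨v, hv0, hv⟩ := exists_mulVec_eq_zero_iff.2 hdet
  obtain ⟨j₀, hj₀⟩ := Function.ne_iff.1 hv0
  obtain ⟨i, -, hmax⟩ := exists_max_image univ (fun j => ‖v j‖) ⟨j₀, mem_univ j₀⟩
  have hmax : ∀ j, ‖v j‖ ≤ ‖v i‖ := fun j => hmax j (mem_univ j)
  have hreach : ∀ k, ReflTransGen (fun a b => A a b ≠ 0) i k → ‖v k‖ = ‖v i‖ := by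
    intro k hik
    induction hik with
    | refl => rfl
    | tail _ hkl ih =>
      exact (norm_eq_of_mulVec_eq_zero hv (fun j => ih ▸ hmax j) (hdom _) hkl).trans ih
  obtain ⟨k, hik, hk⟩ := hchain i
  have hvk : v k ≠ 0 := by
    rw [← norm_pos_iff, hreach k hik]
    exact (norm_pos_iff.2 hj₀).trans_le (hmax j₀)
  exact hk.not_ge (le_sum_norm_of_mulVec_eq_zero hv (fun j => hreach k hik ▸ hmax j) hvk)

end DiagDominant

/-- For a rate matrix `Q`, this removes all transitions into the states `j` with `p j`. -/
def zeroOffDiagCols {n R : Type*} [DecidableEq n] [Zero R] (p : n → Prop) [DecidablePred p]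
    (Q : Matrix n n R) : Matrix n n R :=
  of fun i j => if p j then (if i = j then Q i j else 0) else Q i j

section RateMatrix

variable {n : Type*} [DecidableEq n] {Q : Matrix n n ℝ} {p : n → Prop} [DecidablePred p]

@[simp]
theorem zeroOffDiagCols_apply_self (i : n) : zeroOffDiagCols p Q i i = Q i i := by
  simp [zeroOffDiagCols]

theorem zeroOffDiagCols_apply_of_not {i j : n} (hj : ¬ p j) : zeroOffDiagCols p Q i j = Q i j := by
  simp [zeroOffDiagCols, hj]

theorem zeroOffDiagCols_apply_of_ne {i j : n} (hj : p j) (hij : i ≠ j) :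
    zeroOffDiagCols p Q i j = 0 := by
  simp [zeroOffDiagCols, hj, hij]

theorem norm_zeroOffDiagCols_le (hoff : ∀ i j, i ≠ j → 0 ≤ Q i j) {i j : n} (hij : i ≠ j) :
    ‖zeroOffDiagCols p Q i j‖ ≤ Q i j := by
  by_cases hj : p j
  · simpa [zeroOffDiagCols_apply_of_ne hj hij] using hoff i j hij
  · rw [zeroOffDiagCols_apply_of_not hj, Real.norm_of_nonneg (hoff i j hij)]

variable [Fintype n]

theorem norm_zeroOffDiagCols_diag (hdiag : ∀ i, Q i i ≤ 0) (hrow : ∀ i, ∑ j, Q i j = 0)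
    (i : n) : ‖zeroOffDiagCols p Q i i‖ = ∑ j ∈ univ.erase i, Q i j := by
  rw [zeroOffDiagCols_apply_self, Real.norm_of_nonpos (hdiag i), eq_comm,
    ← add_right_inj (Q i i), add_sum_erase _ _ (mem_univ i), hrow i, add_neg_cancel]

theorem sum_norm_zeroOffDiagCols_le (hoff : ∀ i j, i ≠ j → 0 ≤ Q i j)
    (hdiag : ∀ i, Q i i ≤ 0) (hrow : ∀ i, ∑ j, Q i j = 0) (i : n) :
    ∑ j ∈ univ.erase i, ‖zeroOffDiagCols p Q i j‖ ≤ ‖zeroOffDiagCols p Q i i‖ := by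
  rw [norm_zeroOffDiagCols_diag hdiag hrow]
  exact sum_le_sum fun j hj => norm_zeroOffDiagCols_le hoff (ne_of_mem_erase hj).symm

theorem sum_norm_zeroOffDiagCols_lt (hoff : ∀ i j, i ≠ j → 0 ≤ Q i j)
    (hdiag : ∀ i, Q i i ≤ 0) (hrow : ∀ i, ∑ j, Q i j = 0) {i j : n} (hij : i ≠ j) (hj : p j)
    (hQ : 0 < Q i j) :
    ∑ k ∈ univ.erase i, ‖zeroOffDiagCols p Q i k‖ < ‖zeroOffDiagCols p Q i i‖ := by
  rw [norm_zeroOffDiagCols_diag hdiag hrow]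
  refine sum_lt_sum (fun k hk => norm_zeroOffDiagCols_le hoff (ne_of_mem_erase hk).symm)
    ⟨j, mem_erase.2 ⟨hij.symm, mem_univ j⟩, ?_⟩
  rwa [zeroOffDiagCols_apply_of_ne hj hij, norm_zero]

theorem exists_reflTransGen_zeroOffDiagCols (hoff : ∀ i j, i ≠ j → 0 ≤ Q i j)
    (hdiag : ∀ i, Q i i ≤ 0) (hrow : ∀ i, ∑ j, Q i j = 0) {i j : n}
    (hij : TransGen (fun a b => a ≠ b ∧ 0 < Q a b) i j) (hj : p j) :
    ∃ k, ReflTransGen (fun a b => zeroOffDiagCols p Q a b ≠ 0) i k ∧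
      ∑ l ∈ univ.erase k, ‖zeroOffDiagCols p Q k l‖ < ‖zeroOffDiagCols p Q k k‖ := by
  induction hij using TransGen.head_induction_on with
  | single hab => exact ⟨_, .refl, sum_norm_zeroOffDiagCols_lt hoff hdiag hrow hab.1 hj hab.2⟩
  | @head a b hab _ ih =>
    by_cases hb : p b
    · exact ⟨a, .refl, sum_norm_zeroOffDiagCols_lt hoff hdiag hrow hab.1 hb hab.2⟩
    · obtain ⟨k, hbk, hk⟩ := ih
      refine ⟨k, .head ?_ hbk, hk⟩
      rw [zeroOffDiagCols_apply_of_not hb]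
      exact hab.2.ne'

theorem isUnit_zeroOffDiagCols (hoff : ∀ i j, i ≠ j → 0 ≤ Q i j) (hdiag : ∀ i, Q i i ≤ 0)
    (hrow : ∀ i, ∑ j, Q i j = 0)
    (hreach : ∀ i, ∃ j, p j ∧ TransGen (fun a b => a ≠ b ∧ 0 < Q a b) i j) :
    IsUnit (zeroOffDiagCols p Q) := by
  rw [isUnit_iff_isUnit_det, isUnit_iff_ne_zero]
  refine det_ne_zero_of_weaklyChainedDiagDominant (sum_norm_zeroOffDiagCols_le hoff hdiag hrow)
    fun i => ?_
  obtain ⟨j, hj, hij⟩ := hreach i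
  exact exists_reflTransGen_zeroOffDiagCols hoff hdiag hrow hij hj

end RateMatrix

end Matrix

/-- Proposition: `Q₀` has full rank.  `Q` is the transition rate matrix of an
irreducible continuous-time Markov chain on `s + 2 ≥ 2` states (states 1 and 2
are the indices `0` and `1`); `Q₀` is obtained from `Q` by zeroing out columns
`0` and `1` except for the diagonal entries `Q 0 0` and `Q 1 1`.  Then `Q₀` is
invertible. -/
theorem stmt_9 (s : ℕ) (Q : Matrix (Fin (s + 2)) (Fin (s + 2)) ℝ)
    (hoff : ∀ i j, i ≠ j → 0 ≤ Q i j) (hdiag : ∀ i, Q i i ≤ 0)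
    (hrow : ∀ i, ∑ j, Q i j = 0)
    (hirr : ∀ i j, i ≠ j → Relation.TransGen (fun a b => a ≠ b ∧ 0 < Q a b) i j) :
    IsUnit (Matrix.of (fun i j : Fin (s + 2) =>
      if j = 0 ∨ j = 1 then (if i = j then Q i j else 0) else Q i j)) := by
  refine Matrix.isUnit_zeroOffDiagCols (p := fun j => j = 0 ∨ j = 1) hoff hdiag hrow fun i => ?_
  by_cases hi : i = 0
  · exact ⟨1, Or.inr rfl, hirr i 1 (by simp [hi])⟩
  · exact ⟨0, Or.inl rfl, hirr i 0 hi⟩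
end
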